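/- arXiv:cs/0608007 — 4 statements merged into one kernel-verified Lean document; each statement's English description precedes it below -/
import Mathlib

section
/- Let n ≥ 1 and, for each i = 1,…,n, let P_{X_i Y_i} be a probability distribution on 𝒳 × 𝒴 (𝒳, 𝒴 finite), and let P_{X^n Y^n} := P_{X_1 Y_1} × ⋯ × P_{X_n Y_n}. Then for any δ ∈ [0, log |𝒳|], when (𝐱, 𝐲) is chosen according to P_{X^n Y^n}, the probability that −log(P_{X^n|Y^n}(𝐱,𝐲)) ≤ H(X^n|Y^n) − nδ is at most 2^{-nδ²/(2 log²(|𝒳|+3))}. -/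
open Finset Real

/-- The conditional Shannon entropy `H(X|Y)` of a joint distribution `P` on `X × Y`,
with binary logarithm. -/
noncomputable def condEntropy' {X Y : Type*} [Fintype X] [Fintype Y]
    (P : X × Y → ℝ) : ℝ :=
  -∑ z : X × Y, P z * Real.logb 2 (P z / (∑ x : X, P (x, z.2)))

/-!
Chernoff's bound. Put `kᵢ = log₂ P_{Xᵢ|Yᵢ} ≤ 0`, so the surprisal is `-∑ kᵢ` and has mean
`H(Xⁿ|Yⁿ)`. For `t ≥ 0` the event has probability at most `e^{-t(nδ - H)} 𝔼 e^{t ∑ kᵢ}`, and the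
moment generating function factors over the independent coordinates. As `eˣ ≤ 1 + x + x²/2` for
`x ≤ 0`, each factor is at most `exp (t 𝔼 kᵢ + t² 𝔼 kᵢ² / 2)`. The second moment is at most
`log₂² (|𝒳| + 3)`: since `log²` is concave on `[e, ∞) ∋ 1/q + 3`, Jensen gives
`∑ q log² (1/q + 3) ≤ log² (|supp q| + 3)`. The choice `t = δ / log₂² (|𝒳| + 3)` yields
`exp (-nδ² / (2 log₂² (|𝒳| + 3)))`, which is below the stated power of `2`.
-/

theorem exp_le_quadratic_of_nonpos {x : ℝ} (hx : x ≤ 0) : exp x ≤ 1 + x + x ^ 2 / 2 := by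
  -- with `y = -x ≥ 0`: `(1 - y + y²/2) (1 + y + y²/2 + y³/6) = 1 + y³/6 + y⁴/12 + y⁵/12 ≥ 1`
  have h := sum_le_exp_of_nonneg (neg_nonneg.2 hx) 4
  norm_num [sum_range_succ, Nat.factorial] at h
  have hinv : exp x * exp (-x) = 1 := by rw [← exp_add, add_neg_cancel, exp_zero]
  nlinarith [exp_pos x, sq_nonneg x, mul_nonneg (neg_nonneg.2 hx) (sq_nonneg x),
    pow_two_nonneg (x ^ 2)]

theorem exp_le_two_rpow_of_nonpos {x : ℝ} (hx : x ≤ 0) : exp x ≤ 2 ^ x := by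
  rw [rpow_def_of_pos two_pos]
  exact exp_le_exp.2 (by nlinarith [log_two_lt_d9])

theorem concaveOn_log_sq : ConcaveOn ℝ (Set.Ici (exp 1)) (fun x => log x ^ 2) := by
  have hderiv : ∀ x : ℝ, x ≠ 0 → HasDerivAt (fun x => log x ^ 2) (2 * (log x / x)) x := by
    intro x hx
    refine ((hasDerivAt_log hx).fun_pow 2).congr_deriv ?_
    push_cast; ring
  refine AntitoneOn.concaveOn_of_deriv (convex_Ici _) ?_ ?_ ?_
  · exact (continuousOn_log.mono fun x hx => ((exp_pos 1).trans_le hx).ne').pow 2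
  · intro x hx
    rw [interior_Ici] at hx
    exact (hderiv x ((exp_pos 1).trans hx).ne').differentiableAt.differentiableWithinAt
  · rw [interior_Ici]
    intro x hx y hy hxy
    rw [(hderiv x ((exp_pos 1).trans hx).ne').deriv, (hderiv y ((exp_pos 1).trans hy).ne').deriv]
    exact mul_le_mul_of_nonneg_left
      (log_div_self_antitoneOn (Set.mem_Ici.2 hx.le) (Set.mem_Ici.2 hy.le) hxy) zero_le_two

theorem sum_mul_log_sq_le {ι : Type*} [Fintype ι] (q : ι → ℝ) (h0 : ∀ i, 0 ≤ q i)
    (h1 : ∑ i, q i = 1) : ∑ i, q i * log (q i) ^ 2 ≤ log (Fintype.card ι + 3) ^ 2 := by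
  have hq1 : ∀ i, q i ≤ 1 := fun i => h1 ▸ single_le_sum (fun j _ => h0 j) (mem_univ i)
  have hterm : ∀ i, log (q i) ^ 2 ≤ log ((q i)⁻¹ + 3) ^ 2 := by
    intro i
    rcases (h0 i).eq_or_lt with h | h
    · rw [← h, log_zero, zero_pow two_ne_zero]
      positivity
    · have hinv : 1 ≤ (q i)⁻¹ := one_le_inv_iff₀.2 ⟨h, hq1 i⟩
      rw [← neg_sq, ← log_inv]
      exact pow_le_pow_left₀ (log_nonneg hinv) (log_le_log (by linarith) (by linarith)) 2
  have hmem : ∀ i ∈ univ, (q i)⁻¹ + 3 ∈ Set.Ici (exp 1) := fun i _ => by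
    have := exp_one_lt_d9
    simp only [Set.mem_Ici]
    linarith [inv_nonneg.2 (h0 i)]
  have hmean : ∑ i, q i • ((q i)⁻¹ + 3) = ∑ i, q i * (q i)⁻¹ + 3 := by
    simp only [smul_eq_mul, mul_add, sum_add_distrib, ← sum_mul, h1, one_mul]
  -- `q i * (q i)⁻¹` is the indicator of the support of `q`
  have hsupp : ∑ i, q i * (q i)⁻¹ ≤ Fintype.card ι := by
    simpa using sum_le_sum fun i (_ : i ∈ univ) => mul_inv_le_one (a := q i)
  have hsupp0 : 0 ≤ ∑ i, q i * (q i)⁻¹ :=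
    sum_nonneg fun i _ => mul_nonneg (h0 i) (inv_nonneg.2 (h0 i))
  calc ∑ i, q i * log (q i) ^ 2 ≤ ∑ i, q i • log ((q i)⁻¹ + 3) ^ 2 :=
        sum_le_sum fun i _ => mul_le_mul_of_nonneg_left (hterm i) (h0 i)
    _ ≤ log (∑ i, q i • ((q i)⁻¹ + 3)) ^ 2 :=
        concaveOn_log_sq.le_map_sum (fun i _ => h0 i) h1 hmem
    _ ≤ log (Fintype.card ι + 3) ^ 2 := by
        rw [hmean]
        exact pow_le_pow_left₀ (log_nonneg (by linarith))
          (log_le_log (by linarith) (by linarith)) 2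

theorem sum_mul_log_div_sum_sq_le {ι : Type*} [Fintype ι] (w : ι → ℝ) (h0 : ∀ i, 0 ≤ w i) :
    ∑ i, w i * log (w i / ∑ j, w j) ^ 2 ≤ (∑ j, w j) * log (Fintype.card ι + 3) ^ 2 := by
  rcases (sum_nonneg fun j _ => h0 j : 0 ≤ ∑ j, w j).eq_or_lt with hS | hS
  · have hw : ∀ i, w i = 0 := fun i =>
      (sum_eq_zero_iff_of_nonneg fun j _ => h0 j).1 hS.symm i (mem_univ i)
    simp [hw]
  · have hq := sum_mul_log_sq_le (fun i => w i / ∑ j, w j)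
      (fun i => div_nonneg (h0 i) hS.le) (by rw [← sum_div, div_self hS.ne'])
    calc ∑ i, w i * log (w i / ∑ j, w j) ^ 2
        = (∑ j, w j) * ∑ i, w i / (∑ j, w j) * log (w i / ∑ j, w j) ^ 2 := by
          rw [mul_sum]
          exact sum_congr rfl fun i _ => by rw [← mul_assoc, mul_div_cancel₀ _ hS.ne']
      _ ≤ (∑ j, w j) * log (Fintype.card ι + 3) ^ 2 := mul_le_mul_of_nonneg_left hq hS.le

theorem sum_mul_exp_le_exp_of_nonpos {α : Type*} [Fintype α] (p k : α → ℝ)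
    (hp0 : ∀ a, 0 ≤ p a) (hp1 : ∑ a, p a = 1) (hk : ∀ a, k a ≤ 0) {t : ℝ} (ht : 0 ≤ t) :
    ∑ a, p a * exp (t * k a) ≤
      exp (t * ∑ a, p a * k a + t ^ 2 / 2 * ∑ a, p a * k a ^ 2) := by
  calc ∑ a, p a * exp (t * k a)
      ≤ ∑ a, (p a + t * (p a * k a) + t ^ 2 / 2 * (p a * k a ^ 2)) :=
        sum_le_sum fun a _ => by
          have := exp_le_quadratic_of_nonpos (mul_nonpos_of_nonneg_of_nonpos ht (hk a))
          nlinarith [hp0 a]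
    _ = t * ∑ a, p a * k a + t ^ 2 / 2 * ∑ a, p a * k a ^ 2 + 1 := by
        rw [sum_add_distrib, sum_add_distrib, ← mul_sum, ← mul_sum, hp1]
        ring
    _ ≤ _ := add_one_le_exp _

theorem sum_le_exp_mul_sum_mul_exp {α : Type*} [Fintype α] (s : Finset α) (p S : α → ℝ)
    {a t : ℝ} (hp : ∀ z, 0 ≤ p z) (ht : 0 ≤ t) (hs : ∀ z ∈ s, p z ≠ 0 → a ≤ S z) :
    ∑ z ∈ s, p z ≤ exp (-(t * a)) * ∑ z, p z * exp (t * S z) := by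
  have hpoint : ∀ z ∈ s, p z ≤ exp (-(t * a)) * (p z * exp (t * S z)) := by
    intro z hz
    rcases eq_or_ne (p z) 0 with h | h
    · simp [h]
    · calc p z = p z * 1 := (mul_one _).symm
        _ ≤ p z * exp (t * S z - t * a) :=
          mul_le_mul_of_nonneg_left (one_le_exp (by nlinarith [hs z hz h])) (hp z)
        _ = exp (-(t * a)) * (p z * exp (t * S z)) := by rw [exp_sub, exp_neg]; ring
  calc ∑ z ∈ s, p z ≤ ∑ z ∈ s, exp (-(t * a)) * (p z * exp (t * S z)) := sum_le_sum hpoint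
    _ ≤ ∑ z, exp (-(t * a)) * (p z * exp (t * S z)) :=
        sum_le_sum_of_subset_of_nonneg (subset_univ s) fun z _ _ => by have := hp z; positivity
    _ = exp (-(t * a)) * ∑ z, p z * exp (t * S z) := (mul_sum _ _ _).symm

theorem sum_prod_pair_eq_prod_sum {ι α β R : Type*} [Fintype ι] [DecidableEq ι] [Fintype α]
    [Fintype β] [CommSemiring R] (g : ι → α × β → R) :
    ∑ z : (ι → α) × (ι → β), ∏ i, g i (z.1 i, z.2 i) = ∏ i, ∑ u, g i u := by
  rw [Fintype.prod_sum]
  exact Fintype.sum_equiv (Equiv.arrowProdEquivProdArrow ι _ _).symm _ _ fun z => rfl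

section condProb

variable {X Y : Type*} [Fintype X]

noncomputable def condProb (P : X × Y → ℝ) (z : X × Y) : ℝ := P z / ∑ x, P (x, z.2)

variable {P : X × Y → ℝ}

theorem condProb_nonneg (h0 : ∀ z, 0 ≤ P z) (z : X × Y) : 0 ≤ condProb P z :=
  div_nonneg (h0 z) (sum_nonneg fun x _ => h0 (x, z.2))

theorem condProb_le_one (h0 : ∀ z, 0 ≤ P z) (z : X × Y) : condProb P z ≤ 1 :=
  div_le_one_of_le₀ (single_le_sum (fun x _ => h0 (x, z.2)) (mem_univ z.1))
    (sum_nonneg fun x _ => h0 (x, z.2))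

theorem condProb_ne_zero (h0 : ∀ z, 0 ≤ P z) {z : X × Y} (hz : P z ≠ 0) : condProb P z ≠ 0 :=
  div_ne_zero hz ((lt_of_lt_of_le ((h0 z).lt_of_ne' hz)
    (single_le_sum (fun x _ => h0 (x, z.2)) (mem_univ z.1))).ne')

theorem logb_condProb_nonpos (h0 : ∀ z, 0 ≤ P z) (z : X × Y) : logb 2 (condProb P z) ≤ 0 :=
  logb_nonpos one_lt_two (condProb_nonneg h0 z) (condProb_le_one h0 z)

theorem sum_mul_logb_condProb [Fintype Y] :
    ∑ z, P z * logb 2 (condProb P z) = -condEntropy' P :=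
  (neg_neg _).symm

theorem sum_mul_logb_condProb_sq_le [Fintype Y] (b : ℝ) (h0 : ∀ z, 0 ≤ P z)
    (h1 : ∑ z, P z = 1) :
    ∑ z, P z * logb b (condProb P z) ^ 2 ≤ logb b (Fintype.card X + 3) ^ 2 := by
  have hlog : ∑ z, P z * log (condProb P z) ^ 2 ≤ log (Fintype.card X + 3) ^ 2 :=
    calc ∑ z, P z * log (condProb P z) ^ 2
        = ∑ y, ∑ x, P (x, y) * log (P (x, y) / ∑ x', P (x', y)) ^ 2 :=
          Fintype.sum_prod_type_right _
      _ ≤ ∑ y, (∑ x, P (x, y)) * log (Fintype.card X + 3) ^ 2 :=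
          sum_le_sum fun y _ => sum_mul_log_div_sum_sq_le (fun x => P (x, y)) fun x => h0 _
      _ = log (Fintype.card X + 3) ^ 2 := by
          rw [← sum_mul, ← Fintype.sum_prod_type_right, h1, one_mul]
  simp only [logb, div_pow, ← mul_div_assoc, ← sum_div]
  exact div_le_div_of_nonneg_right hlog (sq_nonneg _)

end condProb

theorem sum_prod_mul_exp_logb_condProb_le {ι X Y : Type*} [Fintype ι] [DecidableEq ι]
    [Fintype X] [Fintype Y]
    (P : ι → X × Y → ℝ) (hP0 : ∀ i z, 0 ≤ P i z) (hP1 : ∀ i, ∑ z, P i z = 1) {t : ℝ}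
    (ht : 0 ≤ t) :
    ∑ z : (ι → X) × (ι → Y),
        (∏ i, P i (z.1 i, z.2 i)) * exp (t * ∑ i, logb 2 (condProb (P i) (z.1 i, z.2 i))) ≤
      exp (∑ i, (t * -condEntropy' (P i) + t ^ 2 / 2 * logb 2 (Fintype.card X + 3) ^ 2)) := by
  rw [exp_sum]
  calc _ = ∏ i, ∑ u, P i u * exp (t * logb 2 (condProb (P i) u)) := by
        rw [← sum_prod_pair_eq_prod_sum]
        simp only [mul_sum, exp_sum, ← prod_mul_distrib]
    _ ≤ _ := prod_le_prod (fun i _ => sum_nonneg fun u _ => mul_nonneg (hP0 i u) (exp_pos _).le)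
        fun i _ => ?_
  refine (sum_mul_exp_le_exp_of_nonpos _ _ (hP0 i) (hP1 i)
    (logb_condProb_nonpos (hP0 i)) ht).trans ?_
  rw [sum_mul_logb_condProb]
  gcongr
  exact sum_mul_logb_condProb_sq_le 2 (hP0 i) (hP1 i)

theorem prob_surprisal_small_upper_bound_general
    {X Y : Type*} [Fintype X] [Fintype Y]
    (n : ℕ) (P : Fin n → X × Y → ℝ)
    (hP0 : ∀ i, ∀ z, 0 ≤ P i z) (hP1 : ∀ i, ∑ z : X × Y, P i z = 1)
    (δ : ℝ) (hδ0 : 0 ≤ δ) :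
    ∑ z ∈ Finset.univ.filter
        (fun z : (Fin n → X) × (Fin n → Y) =>
          -Real.logb 2 (∏ i, P i (z.1 i, z.2 i) / (∑ x : X, P i (x, z.2 i))) ≤
            (∑ i, condEntropy' (P i)) - n * δ),
        (∏ i, P i (z.1 i, z.2 i))
      ≤ 2 ^ (-(n * δ ^ 2) / (2 * (Real.logb 2 (Fintype.card X + 3)) ^ 2)) := by
  set v := logb 2 (Fintype.card X + 3) ^ 2
  have hv : 0 < v := by
    have := (Fintype.card X).cast_nonneg (α := ℝ)
    exact pow_pos (logb_pos one_lt_two (by linarith)) 2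
  set t := δ / v with ht_def
  have ht : 0 ≤ t := by positivity
  calc _ ≤ exp (-(t * (n * δ - ∑ i, condEntropy' (P i)))) * ∑ z : (Fin n → X) × (Fin n → Y),
          (∏ i, P i (z.1 i, z.2 i)) * exp (t * ∑ i, logb 2 (condProb (P i) (z.1 i, z.2 i))) := by
        refine sum_le_exp_mul_sum_mul_exp _ _ _ (fun z => prod_nonneg fun i _ => hP0 i _) ht
          fun z hz hpz => ?_
        have hsurprisal : -logb 2 (∏ i, condProb (P i) (z.1 i, z.2 i)) ≤
            ∑ i, condEntropy' (P i) - n * δ := (mem_filter.1 hz).2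
        rw [logb_prod _ _ fun i _ =>
          condProb_ne_zero (hP0 i) (prod_ne_zero_iff.1 hpz i (mem_univ i))] at hsurprisal
        linarith
    _ ≤ exp (-(t * (n * δ - ∑ i, condEntropy' (P i)))) *
          exp (∑ i, (t * -condEntropy' (P i) + t ^ 2 / 2 * v)) :=
        mul_le_mul_of_nonneg_left (sum_prod_mul_exp_logb_condProb_le P hP0 hP1 ht) (exp_pos _).le
    _ = exp (-(n * δ ^ 2) / (2 * v)) := by
        rw [← exp_add]
        congr 1
        simp only [sum_add_distrib, sum_const, card_univ, Fintype.card_fin, nsmul_eq_mul,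
          ← mul_sum, sum_neg_distrib, ht_def]
        field_simp
        ring
    _ ≤ _ := exp_le_two_rpow_of_nonpos (by rw [neg_div]; exact neg_nonpos.2 (by positivity))

theorem prob_surprisal_small_upper_bound
    {X Y : Type*} [Fintype X] [Fintype Y] [Nonempty X] [Nonempty Y]
    (n : ℕ) (hn : 1 ≤ n) (P : Fin n → X × Y → ℝ)
    (hP0 : ∀ i, ∀ z, 0 ≤ P i z) (hP1 : ∀ i, ∑ z : X × Y, P i z = 1)
    (δ : ℝ) (hδ0 : 0 ≤ δ) (hδ1 : δ ≤ Real.logb 2 (Fintype.card X)) :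
    ∑ z ∈ Finset.univ.filter
        (fun z : (Fin n → X) × (Fin n → Y) =>
          -Real.logb 2 (∏ i, P i (z.1 i, z.2 i) / (∑ x : X, P i (x, z.2 i))) ≤
            (∑ i, condEntropy' (P i)) - n * δ),
        (∏ i, P i (z.1 i, z.2 i))
      ≤ 2 ^ (-(n * δ ^ 2) / (2 * (Real.logb 2 (Fintype.card X + 3)) ^ 2)) :=
  prob_surprisal_small_upper_bound_general n P hP0 hP1 δ hδ0
end

section
/- For any t ∈ ℝ and any z ∈ (0, ∞), r_t(z) ≤ r_{|t|}(z + 1/z), where r_t(z) := z^t − t·ln(z) − 1. -/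
/-! Writing `u = t * log z`, we have `r_t(z) = g(u)` with `g(u) = exp u - u - 1`. The function `g`
satisfies `g(u) ≤ g(|u|)` (this is `u ≤ sinh u` for `u ≥ 0`) and is increasing on `[0, ∞)`.
Since `z + 1/z` dominates both `z` and `1/z`, `|u| ≤ |t| * log (z + 1/z)`, hence
`r_t(z) = g(u) ≤ g(|u|) ≤ g(|t| * log (z + 1/z)) = r_{|t|}(z + 1/z)`. -/

open Real

lemma exp_sub_self_le_exp_abs_sub_abs (u : ℝ) : exp u - u ≤ exp |u| - |u| := by
  rcases le_total 0 u with hu | hu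
  · rw [abs_of_nonneg hu]
  · have hsinh : -u ≤ sinh (-u) := self_le_sinh_iff.mpr (neg_nonneg.mpr hu)
    rw [sinh_eq, neg_neg] at hsinh
    rw [abs_of_nonpos hu]
    linarith

lemma exp_sub_self_le_exp_sub_self {u v : ℝ} (hu : 0 ≤ u) (huv : u ≤ v) :
    exp u - u ≤ exp v - v := by
  have hexp : exp u * (1 + (v - u)) ≤ exp v := by
    calc exp u * (1 + (v - u)) ≤ exp u * exp (v - u) := by gcongr; linarith [add_one_le_exp (v - u)]
      _ = exp v := by rw [← exp_add, add_sub_cancel]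
  nlinarith [one_le_exp hu]

lemma abs_log_le_log_add_inv {z : ℝ} (hz : 0 < z) : |log z| ≤ log (z + z⁻¹) := by
  have hzi : 0 < z⁻¹ := inv_pos.mpr hz
  rw [abs_le]
  constructor
  · have := log_le_log hzi (le_add_of_nonneg_left hz.le)
    rw [log_inv] at this
    linarith
  · exact log_le_log hz (le_add_of_nonneg_right hzi.le)

theorem r_t_le_r_abs_t (t : ℝ) (z : ℝ) (hz : 0 < z) :
    z ^ t - t * Real.log z - 1
      ≤ (z + 1 / z) ^ |t| - |t| * Real.log (z + 1 / z) - 1 := by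
  have hw : 0 < z + 1 / z := by positivity
  have harg : |t * log z| ≤ |t| * log (z + 1 / z) := by
    rw [abs_mul, one_div]
    exact mul_le_mul_of_nonneg_left (abs_log_le_log_add_inv hz) (abs_nonneg t)
  rw [rpow_def_of_pos hz, rpow_def_of_pos hw, mul_comm (log z), mul_comm (log _)]
  have hg := (exp_sub_self_le_exp_abs_sub_abs (t * log z)).trans
    (exp_sub_self_le_exp_sub_self (abs_nonneg _) harg)
  linarith
end

section
/- For any t ∈ [−1/2, 1/2], the function r_t(z) := z^t − t·ln(z) − 1 is concave on the interval [4, ∞). -/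
/-!
Writing `r_t(z) = z ^ t - t log z - 1`, one computes
`r_t''(z) = -t ((1 - t) z ^ t - 1) / z ^ 2`, so concavity amounts to `(1 - t) z ^ t ≥ 1` for
`t > 0` and `(1 - t) z ^ t ≤ 1` for `t < 0`. For `0 ≤ t ≤ 1/2` this follows from
`4 ^ (-t) = (1/2) ^ (2t) ≤ 1 - t` (Bernoulli's inequality with exponent `2t ≤ 1`), and for `t ≤ 0`
from `z ^ t ≤ e ^ t ≤ 1 / (1 - t)` as soon as `z ≥ e`.
-/

open Real

lemma one_le_one_sub_mul_rpow {t z : ℝ} (ht₀ : 0 ≤ t) (ht : t ≤ 1 / 2) (hz : 4 ≤ z) :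
    1 ≤ (1 - t) * z ^ t := by
  have bernoulli : (1 / 2 : ℝ) ^ (2 * t) ≤ 1 - t := by
    have := rpow_one_add_le_one_add_mul_self (s := -(1 / 2)) (by norm_num) (p := 2 * t)
      (by linarith) (by linarith)
    norm_num at this ⊢
    linarith
  have quarter : (1 / 2 : ℝ) ^ (2 * t) = (1 / 4) ^ t := by
    rw [rpow_mul (by norm_num)]
    norm_num
  calc (1 : ℝ) = (1 / 4 * 4) ^ t := by norm_num
    _ = (1 / 4) ^ t * 4 ^ t := mul_rpow (by norm_num) (by norm_num)
    _ ≤ (1 - t) * z ^ t := by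
      rw [← quarter]
      gcongr
      linarith

lemma one_sub_mul_rpow_le_one {t z : ℝ} (ht : t ≤ 0) (hz : exp 1 ≤ z) :
    (1 - t) * z ^ t ≤ 1 := by
  have hz₀ : 0 < z := (exp_pos 1).trans_le hz
  have hlog : 1 ≤ log z := by rwa [le_log_iff_exp_le hz₀]
  calc (1 - t) * z ^ t = (1 - t) * exp (log z * t) := by rw [rpow_def_of_pos hz₀]
    _ ≤ exp (-t) * exp t := by
      gcongr
      · linarith [add_one_le_exp (-t)]
      · nlinarith
    _ = 1 := by rw [← exp_add, neg_add_cancel, exp_zero]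

lemma mul_one_sub_mul_rpow_sub_one_nonneg {t z : ℝ} (ht : t ≤ 1 / 2) (hz : 4 ≤ z) :
    0 ≤ t * ((1 - t) * z ^ t - 1) := by
  rcases le_total 0 t with ht₀ | ht₀
  · exact mul_nonneg ht₀ (sub_nonneg.2 (one_le_one_sub_mul_rpow ht₀ ht hz))
  · have hez : exp 1 ≤ z := by linarith [exp_one_lt_d9]
    exact mul_nonneg_of_nonpos_of_nonpos ht₀ (sub_nonpos.2 (one_sub_mul_rpow_le_one ht₀ hez))

lemma hasDerivAt_rpow_sub_mul_log_sub_one (t : ℝ) {z : ℝ} (hz : z ≠ 0) :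
    HasDerivAt (fun z : ℝ => z ^ t - t * log z - 1) (t * z ^ (t - 1) - t / z) z := by
  have hpow := hasDerivAt_rpow_const (p := t) (Or.inl hz)
  have hlog := (hasDerivAt_log hz).const_mul t
  simpa [div_eq_mul_inv] using (hpow.sub hlog).sub_const 1

lemma hasDerivAt_mul_rpow_sub_one_sub_div (t : ℝ) {z : ℝ} (hz : 0 < z) :
    HasDerivAt (fun z : ℝ => t * z ^ (t - 1) - t / z) (-(t * ((1 - t) * z ^ t - 1)) / z ^ 2) z := by
  have hpow := (hasDerivAt_rpow_const (p := t - 1) (Or.inl hz.ne')).const_mul t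
  have hdiv : HasDerivAt (fun y : ℝ => t / y) (-(t / z ^ 2)) z := by
    simpa [div_eq_mul_inv] using (hasDerivAt_inv hz.ne').const_mul t
  refine (hpow.sub hdiv).congr_deriv ?_
  rw [show t - 1 - 1 = t - 2 by ring, rpow_sub hz, rpow_two]
  field_simp
  ring

theorem r_t_concave (t : ℝ) (ht : t ∈ Set.Icc (-(1 / 2) : ℝ) (1 / 2)) :
    ConcaveOn ℝ (Set.Ici (4 : ℝ)) (fun z : ℝ => z ^ t - t * Real.log z - 1) := by
  have pos_of_mem {z : ℝ} (hz : z ∈ Set.Ioi (4 : ℝ)) : 0 < z := by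
    linarith [Set.mem_Ioi.1 hz]
  refine concaveOn_of_hasDerivWithinAt2_nonpos (f' := fun z => t * z ^ (t - 1) - t / z)
    (f'' := fun z => -(t * ((1 - t) * z ^ t - 1)) / z ^ 2) (convex_Ici 4) ?_ ?_ ?_ ?_
  · intro z hz
    have hz₀ : z ≠ 0 := by linarith [Set.mem_Ici.1 hz]
    exact (hasDerivAt_rpow_sub_mul_log_sub_one t hz₀).continuousAt.continuousWithinAt
  all_goals rw [interior_Ici]; intro z hz
  · exact (hasDerivAt_rpow_sub_mul_log_sub_one t (pos_of_mem hz).ne').hasDerivWithinAt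
  · exact (hasDerivAt_mul_rpow_sub_one_sub_div t (pos_of_mem hz)).hasDerivWithinAt
  · exact div_nonpos_of_nonpos_of_nonneg
      (neg_nonpos.2 (mul_one_sub_mul_rpow_sub_one_nonneg ht.2 (Set.mem_Ioi.1 hz).le)) (sq_nonneg z)
end

section
/- For any z ∈ [1, ∞) and any t ∈ ℝ with −1/log(z) ≤ t ≤ 1/log(z) (no constraint on t when z = 1), one has r_t(z) ≤ (1 − ln 2)·log²(z)·t², where r_t(z) := z^t − t·ln(z) − 1 and log is the binary logarithm. -/
/-!
With `x = t ln z` one has `r_t(z) = eˣ - 1 - x`, and the constraint on `t` says `|x| ≤ ln 2`.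
Comparing Taylor series termwise, `(eˣ - 1 - x) / x²` on `[-a, a]` is at most its value at `a`,
which for `a = ln 2` is `(1 - ln 2) / ln² 2`.
-/

open Real

namespace Real

theorem exp_sub_one_sub_eq_tsum (x : ℝ) :
    exp x - 1 - x = ∑' n : ℕ, x ^ (n + 2) / (n + 2).factorial := by
  have hsum := summable_pow_div_factorial x
  rw [exp_eq_exp_ℝ, NormedSpace.exp_eq_tsum_div]
  beta_reduce
  rw [← hsum.sum_add_tsum_nat_add 2]
  norm_num [Finset.sum_range_succ]
  ring

theorem sq_mul_exp_sub_one_sub_le {x a : ℝ} (hx : |x| ≤ a) :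
    a ^ 2 * (exp x - 1 - x) ≤ x ^ 2 * (exp a - 1 - a) := by
  have hterm : ∀ n : ℕ, a ^ 2 * (x ^ (n + 2) / (n + 2).factorial)
      ≤ x ^ 2 * (a ^ (n + 2) / (n + 2).factorial) := by
    intro n
    have hpow : a ^ 2 * x ^ (n + 2) ≤ x ^ 2 * a ^ (n + 2) :=
      calc a ^ 2 * x ^ (n + 2) ≤ a ^ 2 * (x ^ 2 * |x| ^ n) := by
            gcongr
            rw [pow_add, mul_comm]
            exact mul_le_mul_of_nonneg_left ((le_abs_self _).trans_eq (abs_pow x n)) (sq_nonneg x)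
        _ ≤ a ^ 2 * (x ^ 2 * a ^ n) := by gcongr
        _ = x ^ 2 * a ^ (n + 2) := by ring
    rw [← mul_div_assoc, ← mul_div_assoc]
    gcongr
  have hsummable (y : ℝ) : Summable fun n : ℕ => y ^ (n + 2) / ((n + 2).factorial : ℝ) :=
    (summable_nat_add_iff 2).2 (summable_pow_div_factorial y)
  rw [exp_sub_one_sub_eq_tsum, exp_sub_one_sub_eq_tsum, ← tsum_mul_left, ← tsum_mul_left]
  exact ((hsummable x).mul_left _).tsum_le_tsum hterm ((hsummable a).mul_left _)

end Real

theorem abs_mul_le_one_of_abs_le_one_div {t b : ℝ} (hb : 0 ≤ b) (ht : |t| ≤ 1 / b) :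
    |t * b| ≤ 1 := by
  rcases hb.eq_or_lt with rfl | hb
  · simp
  · rwa [abs_mul, abs_of_pos hb, ← le_div_iff₀ hb]

theorem r_t_quadratic_bound (z t : ℝ) (hz : 1 ≤ z)
    (ht : z = 1 ∨ (-(1 / Real.logb 2 z) ≤ t ∧ t ≤ 1 / Real.logb 2 z)) :
    z ^ t - t * Real.log z - 1
      ≤ (1 - Real.log 2) * (Real.logb 2 z) ^ 2 * t ^ 2 := by
  have hL : 0 < log 2 := log_pos one_lt_two
  have hlog : log z = logb 2 z * log 2 := by rw [logb, div_mul_cancel₀ _ hL.ne']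
  have hx : |t * log z| ≤ log 2 := by
    rw [hlog, ← mul_assoc, abs_mul, abs_of_pos hL]
    refine mul_le_of_le_one_left hL.le ?_
    rcases ht with rfl | ht
    · simp
    · exact abs_mul_le_one_of_abs_le_one_div (logb_nonneg one_lt_two hz) (abs_le.2 ht)
  have key := sq_mul_exp_sub_one_sub_le hx
  rw [exp_log two_pos, hlog] at key
  rw [rpow_def_of_pos (by linarith), mul_comm (log z), hlog]
  refine le_of_mul_le_mul_left ?_ (pow_pos hL 2)
  calc log 2 ^ 2 * (exp (t * (logb 2 z * log 2)) - t * (logb 2 z * log 2) - 1)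
      ≤ (t * (logb 2 z * log 2)) ^ 2 * (2 - 1 - log 2) := by linarith
    _ = log 2 ^ 2 * ((1 - log 2) * logb 2 z ^ 2 * t ^ 2) := by ring
end
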